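/- For all natural numbers i, j with j > i > 0, f(1 / (3^j + 3^i)) = (2/3)^i · (2^(j-i) / (3^(j-i) + 2^(j-i))). -/

import Mathlib

/-!
Both `f` and its reflection `y ↦ 1 - f (1 - y)` satisfy `g (y / 3) = (2/3) * g y` on `[0, 1]`
(the first and third functional equations), hence `g (y / 3 ^ n) = (2/3) ^ n * g y`.
With `c = (2/3) ^ k`, the point `u = 3 ^ k / (3 ^ k + 1)` satisfies `u / 3 ^ k = 1 - u`, so the two
scalings give `f (1 - u) = c * f u` and `1 - f u = c * (1 - f (1 - u))`, a linear system whose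
solution is `f (1 / (3 ^ k + 1)) = c / (1 + c) = 2 ^ k / (3 ^ k + 2 ^ k)`. The general case is
one more scaling by `3 ^ i`.
-/

open Set

lemma map_div_pow_of_map_div {g : ℝ → ℝ} {a c : ℝ} (ha : 1 ≤ a)
    (hg : ∀ y ∈ Icc (0 : ℝ) 1, g (y / a) = c * g y) (n : ℕ) {y : ℝ} (hy : y ∈ Icc (0 : ℝ) 1) :
    g (y / a ^ n) = c ^ n * g y := by
  induction n generalizing y with
  | zero => simp
  | succ n ih =>
    have hya : y / a ∈ Icc (0 : ℝ) 1 :=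
      ⟨div_nonneg hy.1 (by linarith), (div_le_self hy.1 ha).trans hy.2⟩
    rw [pow_succ', ← div_div, ih hya, hg y hy, pow_succ']
    ring

section Bourbaki

variable {f : ℝ → ℝ}

lemma reflect_map_div_three (hw3 : ∀ x ∈ Icc (0 : ℝ) 1, f ((2 + x) / 3) = 1/3 + (2/3) * f x) :
    ∀ y ∈ Icc (0 : ℝ) 1, 1 - f (1 - y / 3) = (2/3) * (1 - f (1 - y)) := by
  intro y hy
  have h := hw3 (1 - y) ⟨by linarith [hy.2], by linarith [hy.1]⟩
  rw [show (2 + (1 - y)) / 3 = 1 - y / 3 by ring] at h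
  rw [h]
  ring

lemma apply_one_div_three_pow_add_one
    (hw1 : ∀ x ∈ Icc (0 : ℝ) 1, f (x / 3) = (2/3) * f x)
    (hw3 : ∀ x ∈ Icc (0 : ℝ) 1, f ((2 + x) / 3) = 1/3 + (2/3) * f x)
    {k : ℕ} (hk : 0 < k) :
    f (1 / (3 ^ k + 1)) = 2 ^ k / (3 ^ k + 2 ^ k) := by
  set c : ℝ := (2/3) ^ k with hc
  set u : ℝ := 3 ^ k / (3 ^ k + 1) with hu
  have h3k : (0 : ℝ) < 3 ^ k := by positivity
  have hu_mem : u ∈ Icc (0 : ℝ) 1 := ⟨by positivity, by rw [hu, div_le_one (by linarith)]; linarith⟩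
  have hu_div : u / 3 ^ k = 1 - u := by rw [hu]; field_simp; ring
  have hx : 1 - u = 1 / (3 ^ k + 1) := by rw [hu]; field_simp; ring
  have hp : f (1 - u) = c * f u := by
    rw [← hu_div]; exact map_div_pow_of_map_div (by norm_num) hw1 k hu_mem
  have hq : 1 - f u = c * (1 - f (1 - u)) := by
    have h := map_div_pow_of_map_div (g := fun y => 1 - f (1 - y)) (by norm_num)
      (reflect_map_div_three hw3) k hu_mem
    rwa [hu_div, sub_sub_cancel] at h
  have hc1 : c < 1 := pow_lt_one₀ (by norm_num) (by norm_num) hk.ne'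
  have hsol : f (1 - u) = c / (1 + c) := by
    rw [eq_div_iff (by positivity)]
    have h : (1 - c) * (f (1 - u) * (1 + c) - c) = 0 := by linear_combination hp - c * hq
    linarith [(mul_eq_zero.mp h).resolve_left (by linarith)]
  rw [← hx, hsol, hc, div_pow]
  field_simp

end Bourbaki

theorem bourbaki_stmt_general (f : ℝ → ℝ)
    (hw1 : ∀ x ∈ Set.Icc (0:ℝ) 1, f (x / 3) = (2/3) * f x)
    (hw3 : ∀ x ∈ Set.Icc (0:ℝ) 1, f ((2 + x) / 3) = 1/3 + (2/3) * f x) :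
    ∀ i j : ℕ, 0 < i → i < j → f (1 / (3 ^ j + 3 ^ i)) = (2/3) ^ i * (2 ^ (j - i) / (3 ^ (j - i) + 2 ^ (j - i))) := by
  intro i j _ hij
  obtain ⟨k, rfl⟩ := Nat.exists_eq_add_of_lt hij
  rw [show i + k + 1 - i = k + 1 by omega]
  have hx_mem : (1 : ℝ) / (3 ^ (k + 1) + 1) ∈ Icc (0 : ℝ) 1 :=
    ⟨by positivity, by rw [div_le_one (by positivity)]; linarith [pow_pos (three_pos (α := ℝ)) (k + 1)]⟩
  have harg : (1 : ℝ) / (3 ^ (i + k + 1) + 3 ^ i) = 1 / (3 ^ (k + 1) + 1) / 3 ^ i := by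
    rw [add_assoc, pow_add]; field_simp
  rw [harg, map_div_pow_of_map_div (by norm_num) hw1 i hx_mem,
    apply_one_div_three_pow_add_one hw1 hw3 k.succ_pos]

theorem bourbaki_stmt (f : ℝ → ℝ)
    (hcont : ContinuousOn f (Set.Icc 0 1))
    (h0 : f 0 = 0) (h1 : f 1 = 1)
    (hw1 : ∀ x ∈ Set.Icc (0:ℝ) 1, f (x / 3) = (2/3) * f x)
    (hw2 : ∀ x ∈ Set.Icc (0:ℝ) 1, f ((2 - x) / 3) = (1/3) * (1 + f x))
    (hw3 : ∀ x ∈ Set.Icc (0:ℝ) 1, f ((2 + x) / 3) = 1/3 + (2/3) * f x) :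
    ∀ i j : ℕ, 0 < i → i < j → f (1 / (3 ^ j + 3 ^ i)) = (2/3) ^ i * (2 ^ (j - i) / (3 ^ (j - i) + 2 ^ (j - i))) :=
  bourbaki_stmt_general f hw1 hw3
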